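/- For each finite word x ∈ Σ^∞ (ℓ(x) < ∞), each u ∈ ℝ≥0 and each v > 0, the formal ball (x, u+v) is way below (x, u) in the poset (BΣ^∞, ⊑_{q_b}). -/

import Mathlib

open scoped NNReal ENNReal

attribute [local instance] Classical.propDecidable

universe u

structure QuasiMetric (X : Type u) where
  d : X → X → ℝ≥0
  eq_iff : ∀ x y, (d x y = 0 ∧ d y x = 0) ↔ x = y
  triangle : ∀ x y z, d x y ≤ d x z + d z y

/-- The order on formal balls: `(x,r) ⊑ (y,s)` iff `d x y ≤ r - s` (real subtraction). -/
def BallLE {X : Type u} (d : X → X → ℝ≥0) (b c : X × ℝ≥0) : Prop :=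
  (d b.1 c.1 : ℝ) ≤ (b.2 : ℝ) - (c.2 : ℝ)

def IsUpperBound {β : Type*} (le : β → β → Prop) (D : Set β) (u : β) : Prop :=
  ∀ a ∈ D, le a u

def IsLub' {β : Type*} (le : β → β → Prop) (D : Set β) (u : β) : Prop :=
  IsUpperBound le D u ∧ ∀ v, IsUpperBound le D v → le u v

def DirectedSubset {β : Type*} (le : β → β → Prop) (D : Set β) : Prop :=
  D.Nonempty ∧ ∀ a ∈ D, ∀ b ∈ D, ∃ c ∈ D, le a c ∧ le b c

/-- `a` is way below `b`. -/
def WayBelow {β : Type*} (le : β → β → Prop) (a b : β) : Prop :=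
  ∀ D : Set β, DirectedSubset le D → ∀ s, IsLub' le D s → le b s → ∃ u ∈ D, le a u

def LeftKCauchyNet {X : Type u} {Λ : Type*} (d : X → X → ℝ≥0) (le : Λ → Λ → Prop)
    (f : Λ → X) : Prop :=
  ∀ ε : ℝ≥0, 0 < ε → ∃ a, ∀ b c, le a b → le b c → d (f b) (f c) < ε

/-- `x` is a Yoneda-limit of the net `f`: for all `y`, `d x y = inf_a sup_{b ≥ a} d (f b) y`
(computed in `ℝ≥0∞` so that the inf/sup always exist). -/
def IsYonedaLimit {X : Type u} {Λ : Type*} (d : X → X → ℝ≥0) (le : Λ → Λ → Prop)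
    (f : Λ → X) (x : X) : Prop :=
  ∀ y, (d x y : ℝ≥0∞) = ⨅ a : Λ, ⨆ b : Λ, ⨆ _ : le a b, (d (f b) y : ℝ≥0∞)

/-- Finite and infinite words over `α`: partial functions on `ℕ` with downward-closed domain. -/
def Word (α : Type u) : Type u := {f : ℕ → Option α // ∀ n, f n = none → f (n + 1) = none}

def emptyWord (α : Type u) : Word α := ⟨fun _ => none, fun _ _ => rfl⟩

/-- The prefix order on words. -/
def wpre {α : Type u} (x y : Word α) : Prop := ∀ n a, x.1 n = some a → y.1 n = some a

/-- The length of a word, in `ℕ∞`. -/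
noncomputable def wlen {α : Type u} (x : Word α) : ℕ∞ := ⨅ n ∈ {n : ℕ | x.1 n = none}, (n : ℕ∞)

/-- `pw n = 2^{-n}`, with `2^{-∞} = 0`. -/
noncomputable def pw (n : ℕ∞) : ℝ≥0 := if n = ⊤ then 0 else (2 : ℝ≥0)⁻¹ ^ n.toNat

/-- The balanced quasi-metric on words. -/
noncomputable def qb {α : Type u} (x y : Word α) : ℝ≥0 :=
  if wpre x y then pw (wlen x) - pw (wlen y) else 1
/-!
Let `(z, w)` be the supremum of the directed family `D` and `(x, u) ⊑ (z, w)`. The words of the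
balls of `D` with radius below `r₀ + 1`, for a lower bound `r₀` of all radii, are pairwise
prefix-compatible, so their union `t` is a word, and `(t, r₀)` is an upper bound of `D`; hence
`r₀ ≤ w`, and some ball `(y, r) ∈ D` has `r < w + ε`. For `ε ≤ 2^{-ℓ(x)}` the word `y` is then
a prefix of `z` long enough to extend the finite word `x`, and `(x, u + v) ⊑ (y, r)` follows for
`ε ≤ v`.
-/

variable {α : Type u}

lemma Word.eq_none_of_le (x : Word α) {m n : ℕ} (hmn : m ≤ n) (h : x.1 m = none) :
    x.1 n = none := by
  induction hmn with
  | refl => exact h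
  | step _ ih => exact x.2 _ ih

lemma wlen_le_coe_iff {x : Word α} {n : ℕ} : wlen x ≤ n ↔ x.1 n = none := by
  refine ⟨fun h => ?_, fun h => iInf₂_le n h⟩
  by_contra hn
  have hlt : ((n + 1 : ℕ) : ℕ∞) ≤ wlen x := le_iInf₂ fun m (hm : x.1 m = none) => by
    have : n < m := lt_of_not_ge fun hmn => hn (x.eq_none_of_le hmn hm)
    exact_mod_cast this
  have := hlt.trans h
  norm_cast at this
  omega

lemma coe_lt_wlen_iff {x : Word α} {n : ℕ} : (n : ℕ∞) < wlen x ↔ x.1 n ≠ none := by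
  rw [lt_iff_not_ge, wlen_le_coe_iff]

lemma wlen_le_wlen_of_wpre {x y : Word α} (h : wpre x y) : wlen x ≤ wlen y :=
  le_iInf₂ fun n (hn : y.1 n = none) => wlen_le_coe_iff.mpr <| by
    cases hx : x.1 n with
    | none => rfl
    | some a => simp [h n a hx] at hn

lemma wpre_of_wlen_le {x y z : Word α} (hxz : wpre x z) (hyz : wpre y z)
    (hlen : wlen x ≤ wlen y) : wpre x y := by
  intro n a hxa
  obtain ⟨b, hyb⟩ := Option.ne_none_iff_exists'.mp <|
    coe_lt_wlen_iff.mp (((coe_lt_wlen_iff (n := n)).mpr (by simp [hxa])).trans_le hlen)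
  have := hxz n a hxa
  rw [hyz n b hyb, Option.some_inj] at this
  rw [hyb, this]

lemma pw_coe (n : ℕ) : pw n = (2 : ℝ≥0)⁻¹ ^ n := by
  simp [pw]

lemma pw_le_one (n : ℕ∞) : pw n ≤ 1 := by
  unfold pw
  split
  · exact zero_le_one
  · exact pow_le_one₀ zero_le (by norm_num)

lemma pw_pos {n : ℕ∞} (h : n ≠ ⊤) : 0 < pw n := by
  rw [pw, if_neg h]
  positivity

lemma pw_antitone : Antitone pw := by
  intro m n h
  induction n using ENat.recTopCoe with
  | top => simp [pw]
  | coe n =>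
    lift m to ℕ using ne_top_of_le_ne_top (ENat.natCast_ne_top n) h
    rw [pw_coe, pw_coe]
    exact pow_le_pow_of_le_one zero_le (by norm_num) (by exact_mod_cast h)

lemma le_of_pw_lt_two_mul {m n : ℕ∞} (hn : n ≠ ⊤) (h : pw m < 2 * pw n) : n ≤ m := by
  by_contra! hmn
  lift n to ℕ using hn
  lift m to ℕ using (hmn.trans_le le_top).ne
  have hmn : m + 1 ≤ n := by exact_mod_cast hmn
  refine h.not_ge ?_
  calc 2 * pw n ≤ 2 * pw (m + 1 : ℕ) := by gcongr; exact pw_antitone (by exact_mod_cast hmn)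
    _ = pw m := by rw [pw_coe, pw_coe, pow_succ]; ring

lemma qb_le_one (x y : Word α) : qb x y ≤ 1 := by
  unfold qb
  split
  · exact tsub_le_self.trans (pw_le_one _)
  · exact le_rfl

lemma qb_of_wpre {x y : Word α} (h : wpre x y) : qb x y = pw (wlen x) - pw (wlen y) :=
  if_pos h

lemma coe_qb_of_wpre {x y : Word α} (h : wpre x y) :
    (qb x y : ℝ) = pw (wlen x) - pw (wlen y) := by
  rw [qb_of_wpre h, NNReal.coe_sub (pw_antitone (wlen_le_wlen_of_wpre h))]

lemma wpre_of_qb_lt_one {x y : Word α} (h : qb x y < 1) : wpre x y := by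
  by_contra h'
  rw [qb, if_neg h'] at h
  exact h.false

lemma wpre_of_qb_lt_pw {x y z : Word α} (hx : wlen x ≠ ⊤) (hxz : wpre x z) (hyz : wpre y z)
    (h : qb y z < pw (wlen x)) : wpre x y := by
  refine wpre_of_wlen_le hxz hyz (le_of_pw_lt_two_mul hx ?_)
  rw [qb_of_wpre hyz, tsub_lt_iff_right (pw_antitone (wlen_le_wlen_of_wpre hyz))] at h
  calc pw (wlen y) < pw (wlen x) + pw (wlen z) := h
    _ ≤ 2 * pw (wlen x) := by
      rw [two_mul]; gcongr; exact pw_antitone (wlen_le_wlen_of_wpre hxz)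

def PairwiseCompatible (S : Set (Word α)) : Prop :=
  ∀ y ∈ S, ∀ y' ∈ S, ∃ c, wpre y c ∧ wpre y' c

noncomputable def unionWord (S : Set (Word α)) : Word α :=
  ⟨fun n => if h : ∃ y ∈ S, y.1 n ≠ none then h.choose.1 n else none, fun n hn => by
    refine dif_neg ?_
    rintro ⟨y, hy, hyn⟩
    have h : ∃ y ∈ S, y.1 n ≠ none := ⟨y, hy, fun h => hyn (y.2 n h)⟩
    exact h.choose_spec.2 (by simpa [dif_pos h] using hn)⟩

lemma wpre_unionWord {S : Set (Word α)} (hS : PairwiseCompatible S) {y : Word α} (hy : y ∈ S) :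
    wpre y (unionWord S) := by
  intro n a ha
  have h : ∃ y ∈ S, y.1 n ≠ none := ⟨y, hy, by simp [ha]⟩
  show dite _ _ _ = _
  rw [dif_pos h]
  obtain ⟨b, hb⟩ := Option.ne_none_iff_exists'.mp h.choose_spec.2
  obtain ⟨c, hyc, hbc⟩ := hS y hy _ h.choose_spec.1
  have := hyc n a ha
  rw [hbc n b hb, Option.some_inj] at this
  rw [hb, this]

lemma exists_mem_coe_lt_wlen_of_lt_unionWord {S : Set (Word α)} {n : ℕ}
    (hn : (n : ℕ∞) < wlen (unionWord S)) :
    ∃ y ∈ S, (n : ℕ∞) < wlen y := by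
  simp only [coe_lt_wlen_iff] at hn ⊢
  by_contra h
  exact hn (dif_neg h)

lemma le_pw_wlen_unionWord {S : Set (Word α)} (hS : PairwiseCompatible S) {c : ℝ} (hc : c ≤ 1)
    (h : ∀ y ∈ S, c ≤ pw (wlen y)) : c ≤ pw (wlen (unionWord S)) := by
  induction hlen : wlen (unionWord S) using ENat.recTopCoe with
  | top =>
    -- arbitrarily long words of `S` force `c ≤ 2^{-n}` for every `n`
    rw [show pw ⊤ = 0 from if_pos rfl, NNReal.coe_zero]
    refine le_of_forall_pos_lt_add fun ε hε => ?_
    obtain ⟨n, hn⟩ := exists_pow_lt_of_lt_one hε (by norm_num : (2 : ℝ)⁻¹ < 1)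
    obtain ⟨y, hy, hny⟩ := exists_mem_coe_lt_wlen_of_lt_unionWord (hlen ▸ WithTop.coe_lt_top n)
    have : (pw (wlen y) : ℝ) ≤ 2⁻¹ ^ n := by
      exact_mod_cast (pw_antitone hny.le).trans_eq (pw_coe n)
    linarith [h y hy]
  | coe n =>
    cases n with
    | zero => simpa [pw] using hc
    | succ m =>
      -- the last letter of the union comes from a word of `S`, which is then as long as the union
      have hm : (m : ℕ∞) < wlen (unionWord S) := by rw [hlen]; exact_mod_cast m.lt_succ_self
      obtain ⟨y, hy, hmy⟩ := exists_mem_coe_lt_wlen_of_lt_unionWord hm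
      have hlen' : wlen y = (m + 1 : ℕ) := le_antisymm (hlen ▸ wlen_le_wlen_of_wpre
        (wpre_unionWord hS hy)) (by exact_mod_cast Order.add_one_le_of_lt hmy)
      exact hlen' ▸ h y hy

lemma wpre_of_ballLE {p q : Word α × ℝ≥0} (h : BallLE qb p q) (hr : (p.2 : ℝ) < q.2 + 1) :
    wpre p.1 q.1 :=
  wpre_of_qb_lt_one <| by
    have : (qb p.1 q.1 : ℝ) < 1 := by unfold BallLE at h; linarith
    exact_mod_cast this

lemma isUpperBound_unionWord {D : Set (Word α × ℝ≥0)} (hD : DirectedSubset (BallLE qb) D)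
    {r₀ : ℝ≥0} (hr₀ : ∀ p ∈ D, r₀ ≤ p.2) :
    IsUpperBound (BallLE qb) D (unionWord {y | ∃ r : ℝ≥0, (y, r) ∈ D ∧ (r : ℝ) < r₀ + 1}, r₀) := by
  set S := {y | ∃ r : ℝ≥0, (y, r) ∈ D ∧ (r : ℝ) < r₀ + 1}
  have common_ext : ∀ p ∈ D, ∀ q ∈ D, (p.2 : ℝ) < r₀ + 1 → (q.2 : ℝ) < r₀ + 1 →
      ∃ c ∈ D, wpre p.1 c.1 ∧ wpre q.1 c.1 ∧ (qb p.1 c.1 : ℝ) ≤ p.2 - r₀ := by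
    intro p hp q hq hpr hqr
    obtain ⟨c, hc, hpc, hqc⟩ := hD.2 p hp q hq
    have hrc : (r₀ : ℝ) ≤ c.2 := hr₀ c hc
    refine ⟨c, hc, wpre_of_ballLE hpc (by linarith), wpre_of_ballLE hqc (by linarith), ?_⟩
    unfold BallLE at hpc
    linarith
  have hS : PairwiseCompatible S := by
    rintro y ⟨r, hy, hr⟩ y' ⟨r', hy', hr'⟩
    obtain ⟨c, -, hyc, hyc', -⟩ := common_ext _ hy _ hy' hr hr'
    exact ⟨c.1, hyc, hyc'⟩
  intro p hp
  show (qb p.1 (unionWord S) : ℝ) ≤ p.2 - r₀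
  by_cases hpr : (r₀ : ℝ) + 1 ≤ p.2
  · have : (qb p.1 (unionWord S) : ℝ) ≤ 1 := by exact_mod_cast qb_le_one _ _
    linarith
  push Not at hpr
  have hpS : wpre p.1 (unionWord S) := wpre_unionWord hS ⟨p.2, hp, hpr⟩
  rw [coe_qb_of_wpre hpS, sub_le_comm]
  refine le_pw_wlen_unionWord hS ?_ ?_
  · have : (pw (wlen p.1) : ℝ) ≤ 1 := by exact_mod_cast pw_le_one _
    have : (r₀ : ℝ) ≤ p.2 := hr₀ p hp
    linarith
  · rintro y ⟨r, hy, hr⟩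
    obtain ⟨c, -, hpc, hyc, hqb⟩ := common_ext p hp _ hy hpr hr
    have : (pw (wlen c.1) : ℝ) ≤ pw (wlen y) := by
      exact_mod_cast pw_antitone (wlen_le_wlen_of_wpre hyc)
    rw [coe_qb_of_wpre hpc] at hqb
    linarith

lemma le_radius_of_isLub' {D : Set (Word α × ℝ≥0)} (hD : DirectedSubset (BallLE qb) D)
    {s : Word α × ℝ≥0} (hs : IsLub' (BallLE qb) D s) {r₀ : ℝ≥0} (hr₀ : ∀ p ∈ D, r₀ ≤ p.2) :
    r₀ ≤ s.2 := by
  have h := hs.2 _ (isUpperBound_unionWord hD hr₀)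
  exact_mod_cast sub_nonneg.mp ((NNReal.coe_nonneg _).trans h)

lemma exists_mem_radius_lt {D : Set (Word α × ℝ≥0)} (hD : DirectedSubset (BallLE qb) D)
    {s : Word α × ℝ≥0} (hs : IsLub' (BallLE qb) D s) {ε : ℝ≥0} (hε : 0 < ε) :
    ∃ p ∈ D, p.2 < s.2 + ε := by
  by_contra! h
  exact (lt_add_of_pos_right s.2 hε).not_ge (le_radius_of_isLub' hD hs h)

theorem stmt12 {α : Type u} (x : Word α) (hx : wlen x ≠ ⊤) (u v : ℝ≥0) (hv : 0 < v) :
    WayBelow (BallLE (qb (α := α))) (x, u + v) (x, u) := by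
  rintro D hD ⟨z, w⟩ hlub (hxz : (qb x z : ℝ) ≤ u - w)
  set ε := min v (pw (wlen x))
  obtain ⟨p, hpD, hpw⟩ := exists_mem_radius_lt hD hlub (lt_min hv (pw_pos hx) : 0 < ε)
  refine ⟨p, hpD, show (qb x p.1 : ℝ) ≤ ((u + v : ℝ≥0) : ℝ) - p.2 from ?_⟩
  have hpz : (qb p.1 z : ℝ) ≤ p.2 - w := hlub.1 p hpD
  have hpw : (p.2 : ℝ) < w + ε := by exact_mod_cast hpw
  have hεv : (ε : ℝ) ≤ v := by exact_mod_cast min_le_left _ _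
  have hεx : ε ≤ pw (wlen x) := min_le_right _ _
  have hpz_lt : qb p.1 z < pw (wlen x) := by
    have : (qb p.1 z : ℝ) < ε := by linarith
    exact_mod_cast this.trans_le hεx
  push_cast
  by_cases hxz' : wpre x z
  · have hpz' : wpre p.1 z := wpre_of_qb_lt_one (hpz_lt.trans_le (pw_le_one _))
    have hxp : wpre x p.1 := wpre_of_qb_lt_pw hx hxz' hpz' hpz_lt
    have : (pw (wlen z) : ℝ) ≤ pw (wlen p.1) := by
      exact_mod_cast pw_antitone (wlen_le_wlen_of_wpre hpz')
    rw [coe_qb_of_wpre hxp]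
    rw [coe_qb_of_wpre hxz'] at hxz
    linarith
  · have : (qb x p.1 : ℝ) ≤ 1 := by exact_mod_cast qb_le_one _ _
    rw [qb, if_neg hxz'] at hxz
    push_cast at hxz
    linarith
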